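/- arXiv:1404.4312 — 7 statements merged into one kernel-verified Lean document; each statement's English description precedes it below -/
import Mathlib

section
/- Let B be a finite multiset of intervals whose endpoints lie in a fixed finite set of critical values t_0 < t_1 < ... < t_N, and let i(t,t') denote the number of intervals in B containing [t,t']. Then the number of open intervals (t_k, t_j) in B equals i(t'',t') - i(t_k,t') - i(t'',t_j) + i(t_k,t_j) for any t'', t' with t_k < t'' < t_{k+1} and t_{j-1} < t' < t_j. -/
open Classical Multiset

noncomputable section

/-- The four kinds of intervals: closed-closed, closed-open, open-closed, open-open. -/
inductive BarKind : Type
  | cc | co | oc | oo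
  deriving DecidableEq

/-- A real interval of one of the four types, with endpoints `a ≤ b`. -/
structure Bar : Type where
  kind : BarKind
  a : ℝ
  b : ℝ

instance : DecidableEq Bar := Classical.decEq _

namespace Bar

/-- The underlying set of points of the interval. -/
def toSet (I : Bar) : Set ℝ :=
  match I.kind with
  | .cc => Set.Icc I.a I.b
  | .co => Set.Ico I.a I.b
  | .oc => Set.Ioc I.a I.b
  | .oo => Set.Ioo I.a I.b

/-- Nonemptiness condition: `a ≤ b` for closed intervals, `a < b` otherwise. -/
def Valid (I : Bar) : Prop :=
  match I.kind with
  | .cc => I.a ≤ I.b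
  | _ => I.a < I.b

def rightOpen (I : Bar) : Prop := I.kind = .co ∨ I.kind = .oo
def leftOpen (I : Bar) : Prop := I.kind = .oc ∨ I.kind = .oo
def leftClosed (I : Bar) : Prop := I.kind = .cc ∨ I.kind = .co

end Bar

/-- `i(t,t')`: the number of intervals of `B` containing `[t,t']`. -/
def icount (B : Multiset Bar) (t t' : ℝ) : ℕ :=
  countP (fun I => Set.Icc t t' ⊆ I.toSet) B

/-- `l(t)`: the number of intervals of `B` containing `t`. -/
def lcount (B : Multiset Bar) (t : ℝ) : ℕ :=
  countP (fun I => t ∈ I.toSet) B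

/-- `l⁺(t;t')`: intervals of `B` containing `t` with open right endpoint `≤ t'`. -/
def lplus (B : Multiset Bar) (t t' : ℝ) : ℕ :=
  countP (fun I => t ∈ I.toSet ∧ I.rightOpen ∧ I.b ≤ t') B

/-- `l⁻(t;t'')`: intervals of `B` containing `t` with open left endpoint `≥ t''`. -/
def lminus (B : Multiset Bar) (t t'' : ℝ) : ℕ :=
  countP (fun I => t ∈ I.toSet ∧ I.leftOpen ∧ t'' ≤ I.a) B

/-- `e(t;t',t'')`: open intervals `(a,b)` of `B` with `t'' ≤ a < t < b ≤ t'`. -/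
def ecount (B : Multiset Bar) (t t' t'' : ℝ) : ℕ :=
  countP (fun I => I.kind = .oo ∧ t'' ≤ I.a ∧ I.a < t ∧ t < I.b ∧ I.b ≤ t') B

/-- All endpoints of intervals of `B` lie among the critical values `t 0, …, t N`. -/
def endpointsIn (B : Multiset Bar) (t : ℕ → ℝ) (N : ℕ) : Prop :=
  ∀ I ∈ B, (∃ i ≤ N, I.a = t i) ∧ (∃ j ≤ N, I.b = t j)

/-!
Every interval is order-connected, so `[s, s'] ⊆ I` iff `s ∈ I` and `s' ∈ I`. Hence the
alternating sum `i(t'',t') - i(t_k,t') - i(t'',t_j) + i(t_k,t_j)` counts, interval by interval,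
those `I ∈ B` containing `t''` and `t'` but neither `t_k` nor `t_j`. No critical value lies in
`(t_k, t''] ∪ [t', t_j)`, so such an `I` starts at `t_k` and ends at `t_j`, open at both ends.
-/

lemma Set.OrdConnected.Icc_subset_iff {α : Type*} [Preorder α] {s : Set α} (hs : s.OrdConnected)
    {x y : α} (hxy : x ≤ y) : Set.Icc x y ⊆ s ↔ x ∈ s ∧ y ∈ s :=
  ⟨fun h => ⟨h (Set.left_mem_Icc.2 hxy), h (Set.right_mem_Icc.2 hxy)⟩, fun h => hs.out h.1 h.2⟩

lemma Set.OrdConnected.Icc_subset_inclusion_exclusion {α : Type*} [Preorder α] {s : Set α}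
    (hs : s.OrdConnected) {a b c d : α} (hab : a ≤ b) (hbc : b ≤ c) (hcd : c ≤ d) :
    ((if Set.Icc b c ⊆ s then 1 else 0 : ℤ) - (if Set.Icc a c ⊆ s then 1 else 0)
      - (if Set.Icc b d ⊆ s then 1 else 0) + (if Set.Icc a d ⊆ s then 1 else 0)) =
      if b ∈ s ∧ c ∈ s ∧ a ∉ s ∧ d ∉ s then 1 else 0 := by
  have hac := hab.trans hbc
  have hbd := hbc.trans hcd
  have hb : a ∈ s → c ∈ s → b ∈ s := fun ha hc => hs.out ha hc ⟨hab, hbc⟩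
  have hc : b ∈ s → d ∈ s → c ∈ s := fun hb hd => hs.out hb hd ⟨hbc, hcd⟩
  have hb' : a ∈ s → d ∈ s → b ∈ s := fun ha hd => hs.out ha hd ⟨hab, hbd⟩
  simp only [hs.Icc_subset_iff hbc, hs.Icc_subset_iff hac, hs.Icc_subset_iff hbd,
    hs.Icc_subset_iff (hac.trans hcd)]
  by_cases a ∈ s <;> by_cases b ∈ s <;> by_cases c ∈ s <;> by_cases d ∈ s <;> simp_all

lemma Multiset.countP_Icc_subset_inclusion_exclusion {ι α : Type*} [Preorder α] (B : Multiset ι)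
    (f : ι → Set α) (hf : ∀ I ∈ B, (f I).OrdConnected) {a b c d : α}
    (hab : a ≤ b) (hbc : b ≤ c) (hcd : c ≤ d) :
    (B.countP (fun I => Set.Icc b c ⊆ f I) : ℤ) - B.countP (fun I => Set.Icc a c ⊆ f I)
      - B.countP (fun I => Set.Icc b d ⊆ f I) + B.countP (fun I => Set.Icc a d ⊆ f I) =
      B.countP (fun I => b ∈ f I ∧ c ∈ f I ∧ a ∉ f I ∧ d ∉ f I) := by
  induction B using Multiset.induction_on with
  | empty => simp
  | cons I B ih =>
    have hI := (hf I (Multiset.mem_cons_self I B)).Icc_subset_inclusion_exclusion hab hbc hcd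
    have hB := ih fun J hJ => hf J (Multiset.mem_cons_of_mem hJ)
    simp only [Multiset.countP_cons, Nat.cast_add, Nat.cast_ite, Nat.cast_one, Nat.cast_zero]
    linarith

namespace Bar

lemma ordConnected_toSet (I : Bar) : I.toSet.OrdConnected := by
  unfold toSet
  cases I.kind <;> infer_instance

lemma mem_toSet_and_not_mem_iff_eq_oo {I : Bar} {tk t'' t' tj : ℝ} (hk : tk < t'')
    (hle : t'' ≤ t') (hj : t' < tj) (ha : I.a ≤ tk ∨ t'' < I.a) (hb : tj ≤ I.b ∨ I.b < t') :
    (t'' ∈ I.toSet ∧ t' ∈ I.toSet ∧ tk ∉ I.toSet ∧ tj ∉ I.toSet) ↔ I = ⟨.oo, tk, tj⟩ := by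
  constructor
  · obtain ⟨kind, a, b⟩ := I
    intro h
    cases kind <;> simp only [toSet, Set.mem_Icc, Set.mem_Ico, Set.mem_Ioc, Set.mem_Ioo] at h ha hb
      <;> grind
  · rintro rfl
    simp only [toSet, Set.mem_Ioo, lt_irrefl, false_and, and_false, not_false_eq_true, and_true]
    exact ⟨⟨hk, by linarith⟩, by linarith, by linarith⟩

end Bar

theorem stmt1_general (N : ℕ) (t : ℕ → ℝ) (ht : StrictMono t)
    (B : Multiset Bar) (hB : endpointsIn B t N)
    (k j : ℕ)
    (t'' t' : ℝ) (h1 : t k < t'') (h2 : t'' < t (k + 1))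
    (h3 : t (j - 1) < t') (h4 : t' < t j) (h5 : t'' ≤ t') :
    (count (⟨.oo, t k, t j⟩ : Bar) B : ℤ) =
      (icount B t'' t' : ℤ) - icount B (t k) t' - icount B t'' (t j)
        + icount B (t k) (t j) := by
  have hsep : ∀ I ∈ B, (I.a ≤ t k ∨ t'' < I.a) ∧ (t j ≤ I.b ∨ I.b < t') := by
    intro I hI
    obtain ⟨⟨i, -, hai⟩, ⟨m, -, hbm⟩⟩ := hB I hI
    rw [hai, hbm]
    constructor
    · rcases le_or_gt i k with h | h
      · exact Or.inl (ht.monotone h)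
      · exact Or.inr (h2.trans_le (ht.monotone h))
    · rcases le_or_gt j m with h | h
      · exact Or.inl (ht.monotone h)
      · exact Or.inr ((ht.monotone (Nat.le_sub_one_of_lt h)).trans_lt h3)
  simp only [icount]
  rw [Multiset.countP_Icc_subset_inclusion_exclusion B Bar.toSet
    (fun I _ => I.ordConnected_toSet) h1.le h5 h4.le, count]
  exact congrArg _ <| Multiset.countP_congr rfl fun I hI => propext <|
    eq_comm.trans (Bar.mem_toSet_and_not_mem_iff_eq_oo h1 h5 h4 (hsep I hI).1 (hsep I hI).2).symm

theorem stmt1 (N : ℕ) (t : ℕ → ℝ) (ht : StrictMono t)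
    (B : Multiset Bar) (hB : endpointsIn B t N)
    (k j : ℕ) (hk : k + 1 ≤ N) (hj1 : 1 ≤ j) (hjN : j ≤ N)
    (t'' t' : ℝ) (h1 : t k < t'') (h2 : t'' < t (k + 1))
    (h3 : t (j - 1) < t') (h4 : t' < t j) (h5 : t'' ≤ t') :
    (count (⟨.oo, t k, t j⟩ : Bar) B : ℤ) =
      (icount B t'' t' : ℤ) - icount B (t k) t' - icount B t'' (t j)
        + icount B (t k) (t j) :=
  stmt1_general N t ht B hB k j t'' t' h1 h2 h3 h4 h5
end
end

section
/- With B, critical values, and i(t,t') as above, the number of closed intervals [t_k, t_j] in B equals i(t_k,t_j) - i(t'',t_j) - i(t_k,t') + i(t'',t') for any t'' with t_{k-1} < t'' < t_k and any t' with t_j < t' < t_{j+1}. -/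
open Classical Multiset

noncomputable section

/-! For a single interval `I` and `x ≤ y`, `[x, y] ⊆ I` splits into a condition on `x` (it lies
in the ray `I.leftRay` cut out by the left endpoint) and one on `y` (it lies in `I.rightRay`).
Hence the alternating sum of the four indicators factors as
`([t_k ∈ I.leftRay] - [t'' ∈ I.leftRay]) * ([t_j ∈ I.rightRay] - [t' ∈ I.rightRay])`.
No critical value lies in `[t'', t_k)` or `(t_j, t']`, so the first factor is the indicator of a
closed left endpoint at `t_k` and the second that of a closed right endpoint at `t_j`; summing over
`B` gives the formula. -/

theorem Multiset.natCast_countP_eq_sum_map_boole {α R : Type*} [NonAssocSemiring R]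
    (p : α → Prop) [DecidablePred p] (s : Multiset α) :
    (countP p s : R) = (s.map fun x => if p x then 1 else 0).sum := by
  induction s using Multiset.induction with
  | empty => simp
  | cons x s ih => by_cases hx : p x <;> simp [hx, ih, add_comm]

namespace Bar

def leftRay (I : Bar) : Set ℝ :=
  match I.kind with
  | .cc | .co => Set.Ici I.a
  | .oc | .oo => Set.Ioi I.a

def rightRay (I : Bar) : Set ℝ :=
  match I.kind with
  | .cc | .oc => Set.Iic I.b
  | .co | .oo => Set.Iio I.b

theorem Icc_subset_toSet_iff (I : Bar) {x y : ℝ} (hxy : x ≤ y) :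
    Set.Icc x y ⊆ I.toSet ↔ x ∈ I.leftRay ∧ y ∈ I.rightRay := by
  rcases I with ⟨_ | _ | _ | _, a, b⟩ <;>
    simp [toSet, leftRay, rightRay, Set.Icc_subset_Icc_iff hxy, Set.Icc_subset_Ico_iff hxy,
      Set.Icc_subset_Ioc_iff hxy, Set.Icc_subset_Ioo_iff hxy]

theorem boole_mem_leftRay_sub (I : Bar) {u s : ℝ} (hus : u < s) (ha : I.a ∉ Set.Ico u s) :
    ((if s ∈ I.leftRay then 1 else 0) - if u ∈ I.leftRay then 1 else 0 : ℤ) =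
      if I.leftClosed ∧ I.a = s then 1 else 0 := by
  rw [Set.mem_Ico] at ha
  rcases I with ⟨_ | _ | _ | _, a, b⟩ <;> simp only [leftRay, leftClosed] at ha ⊢ <;>
    grind

theorem boole_mem_rightRay_sub (I : Bar) {e v : ℝ} (hev : e < v) (hb : I.b ∉ Set.Ioc e v) :
    ((if e ∈ I.rightRay then 1 else 0) - if v ∈ I.rightRay then 1 else 0 : ℤ) =
      if ¬ I.rightOpen ∧ I.b = e then 1 else 0 := by
  rw [Set.mem_Ioc] at hb
  rcases I with ⟨_ | _ | _ | _, a, b⟩ <;> simp only [rightRay, rightOpen] at hb ⊢ <;>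
    grind

theorem mk_cc_eq_iff (I : Bar) (s e : ℝ) :
    ⟨.cc, s, e⟩ = I ↔ (I.leftClosed ∧ I.a = s) ∧ (¬ I.rightOpen ∧ I.b = e) := by
  rcases I with ⟨_ | _ | _ | _, a, b⟩ <;> simp [leftClosed, rightOpen, eq_comm]

theorem boole_cc_eq_inclusion_exclusion (I : Bar) {u s e v : ℝ} (hus : u < s) (hse : s ≤ e)
    (hev : e < v) (ha : I.a ∉ Set.Ico u s) (hb : I.b ∉ Set.Ioc e v) :
    (if (⟨.cc, s, e⟩ : Bar) = I then 1 else 0 : ℤ) =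
      (if Set.Icc s e ⊆ I.toSet then 1 else 0) - (if Set.Icc u e ⊆ I.toSet then 1 else 0)
        - (if Set.Icc s v ⊆ I.toSet then 1 else 0)
        + (if Set.Icc u v ⊆ I.toSet then 1 else 0) := by
  have boole_and (P Q : Prop) [Decidable P] [Decidable Q] :
      (if P ∧ Q then 1 else 0 : ℤ) = (if P then 1 else 0) * (if Q then 1 else 0) := by
    rw [ite_zero_mul_ite_zero, mul_one]
  have hue : u ≤ e := hus.le.trans hse
  have hsv : s ≤ v := hse.trans hev.le
  simp only [mk_cc_eq_iff]
  rw [boole_and, ← I.boole_mem_leftRay_sub hus ha, ← I.boole_mem_rightRay_sub hev hb]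
  simp only [I.Icc_subset_toSet_iff hse, I.Icc_subset_toSet_iff hue, I.Icc_subset_toSet_iff hsv,
    I.Icc_subset_toSet_iff (hue.trans hev.le), boole_and]
  ring

end Bar

theorem StrictMono.apply_notMem_Ico_of_pred_lt {α : Type*} [LinearOrder α] {t : ℕ → α}
    (ht : StrictMono t) {k : ℕ} {x : α} (hk : k = 0 ∨ t (k - 1) < x) (i : ℕ) :
    t i ∉ Set.Ico x (t k) := by
  rintro ⟨hxi, hik⟩
  have hik : i < k := ht.lt_iff_lt.mp hik
  rcases hk with rfl | hk
  · omega
  · exact (ht.monotone (by omega : i ≤ k - 1)).trans_lt hk |>.not_ge hxi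

theorem StrictMono.apply_notMem_Ioc_of_lt_succ {α : Type*} [LinearOrder α] {t : ℕ → α}
    (ht : StrictMono t) {j N : ℕ} {y : α} (hj : j = N ∨ y < t (j + 1)) {i : ℕ}
    (hi : i ≤ N) :
    t i ∉ Set.Ioc (t j) y := by
  rintro ⟨hji, hiy⟩
  have hji : j < i := ht.lt_iff_lt.mp hji
  rcases hj with rfl | hj
  · omega
  · exact hj.trans_le (ht.monotone (by omega : j + 1 ≤ i)) |>.not_ge hiy

theorem stmt2_general (N : ℕ) (t : ℕ → ℝ) (ht : StrictMono t)
    (B : Multiset Bar) (hB : endpointsIn B t N)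
    (k j : ℕ) (hkj : k ≤ j)
    (t'' t' : ℝ) (h1 : t'' < t k) (h2 : k = 0 ∨ t (k - 1) < t'')
    (h3 : t j < t') (h4 : j = N ∨ t' < t (j + 1)) :
    (count (⟨.cc, t k, t j⟩ : Bar) B : ℤ) =
      (icount B (t k) (t j) : ℤ) - icount B t'' (t j) - icount B (t k) t'
        + icount B t'' t' := by
  simp only [count, icount, Multiset.natCast_countP_eq_sum_map_boole]
  rw [← sum_map_sub, ← sum_map_sub, ← sum_map_add]
  refine congrArg _ (map_congr rfl fun I hI => ?_)
  obtain ⟨⟨ia, -, ha⟩, ⟨ib, hib, hb⟩⟩ := hB I hI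
  refine I.boole_cc_eq_inclusion_exclusion h1 (ht.monotone hkj) h3 ?_ ?_
  · exact ha ▸ ht.apply_notMem_Ico_of_pred_lt h2 ia
  · exact hb ▸ ht.apply_notMem_Ioc_of_lt_succ h4 hib

theorem stmt2 (N : ℕ) (t : ℕ → ℝ) (ht : StrictMono t)
    (B : Multiset Bar) (hB : endpointsIn B t N)
    (k j : ℕ) (hkj : k ≤ j) (hjN : j ≤ N)
    (t'' t' : ℝ) (h1 : t'' < t k) (h2 : k = 0 ∨ t (k - 1) < t'')
    (h3 : t j < t') (h4 : j = N ∨ t' < t (j + 1)) :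
    (count (⟨.cc, t k, t j⟩ : Bar) B : ℤ) =
      (icount B (t k) (t j) : ℤ) - icount B t'' (t j) - icount B (t k) t'
        + icount B t'' t' :=
  stmt2_general N t ht B hB k j hkj t'' t' h1 h2 h3 h4
end
end

section
/- Define e(t;t',t'') for t'' ≤ t ≤ t' as the number of open intervals (a,b) in B with t'' ≤ a < t < b ≤ t'. Then for critical values t_k < t < t_j, the multiplicity of the open interval (t_k,t_j) in B equals e(t; t_j, t_k) - e(t; t_j, t_{k+1}) - e(t; t_{j-1}, t_k) + e(t; t_{j-1}, t_{k+1}). -/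
open Classical Multiset

noncomputable section

/-!
Inclusion–exclusion: the alternating sum of the four `e`'s counts the open intervals `(a,b)` of `B`
with `s ∈ (a,b)`, `t_k ≤ a < t_{k+1}` and `t_{j-1} < b ≤ t_j`. Since every endpoint is a critical
value, these are exactly the copies of `(t_k,t_j)`.
-/

theorem Multiset.countP_and_not_and_not {α : Type*} (p q r : α → Prop) [DecidablePred p]
    [DecidablePred q] [DecidablePred r] (B : Multiset α) :
    (countP (fun x => p x ∧ ¬q x ∧ ¬r x) B : ℤ) =
      countP p B - countP (fun x => p x ∧ q x) B - countP (fun x => p x ∧ r x) B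
        + countP (fun x => p x ∧ q x ∧ r x) B := by
  induction B using Multiset.induction with
  | empty => simp
  | cons x B ih =>
    simp only [countP_cons, Nat.cast_add, ih]
    by_cases hp : p x <;> by_cases hq : q x <;> by_cases hr : r x <;> simp [hp, hq, hr] <;> ring

namespace Bar

def InWindow (s t' t'' : ℝ) (I : Bar) : Prop :=
  I.kind = .oo ∧ t'' ≤ I.a ∧ I.a < s ∧ s < I.b ∧ I.b ≤ t'

variable {s t' t'' u' u'' : ℝ} {I : Bar}

theorem inWindow_iff_of_le_lower (h : t'' ≤ u'') :
    I.InWindow s t' u'' ↔ I.InWindow s t' t'' ∧ u'' ≤ I.a := by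
  unfold InWindow
  constructor
  · rintro ⟨hk, ha, has, hsb, hb⟩
    exact ⟨⟨hk, h.trans ha, has, hsb, hb⟩, ha⟩
  · rintro ⟨⟨hk, -, has, hsb, hb⟩, ha⟩
    exact ⟨hk, ha, has, hsb, hb⟩

theorem inWindow_iff_of_le_upper (h : u' ≤ t') :
    I.InWindow s u' t'' ↔ I.InWindow s t' t'' ∧ I.b ≤ u' := by
  unfold InWindow
  constructor
  · rintro ⟨hk, ha, has, hsb, hb⟩
    exact ⟨⟨hk, ha, has, hsb, hb.trans h⟩, hb⟩
  · rintro ⟨⟨hk, ha, has, hsb, -⟩, hb⟩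
    exact ⟨hk, ha, has, hsb, hb⟩

theorem inWindow_and_not_and_not_iff {t : ℕ → ℝ} (ht : StrictMono t) {k j : ℕ}
    (hkj : k < j) (hks : t k < s) (hsj : s < t j)
    (ha : I.a ∈ Set.range t) (hb : I.b ∈ Set.range t) :
    I.InWindow s (t j) (t k) ∧ ¬t (k + 1) ≤ I.a ∧ ¬I.b ≤ t (j - 1) ↔
      (⟨.oo, t k, t j⟩ : Bar) = I := by
  obtain ⟨i, hi⟩ := ha
  obtain ⟨m, hm⟩ := hb
  constructor
  · rintro ⟨⟨hoo, hki, -, -, hmj⟩, hik, hjm⟩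
    rw [← hi, ht.le_iff_le] at hki hik
    rw [← hm, ht.le_iff_le] at hmj hjm
    obtain ⟨kind, a, b⟩ := I
    obtain rfl : i = k := by omega
    obtain rfl : m = j := by omega
    simp_all
  · rintro rfl
    simp only [InWindow, ht.le_iff_le, true_and, le_refl, hks, hsj]
    omega

end Bar

theorem ecount_eq_countP_inWindow (B : Multiset Bar) (s t' t'' : ℝ) :
    ecount B s t' t'' = countP (Bar.InWindow s t' t'') B := by
  unfold ecount Bar.InWindow
  congr!

theorem stmt6_general (N : ℕ) (t : ℕ → ℝ) (ht : StrictMono t)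
    (B : Multiset Bar) (hB : endpointsIn B t N)
    (k j : ℕ) (hkj : k < j)
    (s : ℝ) (h1 : t k < s) (h2 : s < t j) :
    (count (⟨.oo, t k, t j⟩ : Bar) B : ℤ) =
      (ecount B s (t j) (t k) : ℤ) - ecount B s (t j) (t (k + 1))
        - ecount B s (t (j - 1)) (t k) + ecount B s (t (j - 1)) (t (k + 1)) := by
  have hk : t k ≤ t (k + 1) := ht.monotone k.le_succ
  have hj : t (j - 1) ≤ t j := ht.monotone (j.sub_le 1)
  have hlower : countP (Bar.InWindow s (t j) (t (k + 1))) B =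
      countP (fun I => I.InWindow s (t j) (t k) ∧ t (k + 1) ≤ I.a) B :=
    countP_congr rfl fun I _ => propext (Bar.inWindow_iff_of_le_lower hk)
  have hupper : countP (Bar.InWindow s (t (j - 1)) (t k)) B =
      countP (fun I => I.InWindow s (t j) (t k) ∧ I.b ≤ t (j - 1)) B :=
    countP_congr rfl fun I _ => propext (Bar.inWindow_iff_of_le_upper hj)
  have hboth : countP (Bar.InWindow s (t (j - 1)) (t (k + 1))) B =
      countP (fun I => I.InWindow s (t j) (t k) ∧ t (k + 1) ≤ I.a ∧ I.b ≤ t (j - 1)) B :=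
    countP_congr rfl fun I _ => by
      rw [Bar.inWindow_iff_of_le_upper hj, Bar.inWindow_iff_of_le_lower hk, and_assoc]
  simp only [ecount_eq_countP_inWindow, hlower, hupper, hboth,
    ← countP_and_not_and_not]
  refine congrArg Nat.cast (countP_congr rfl fun I hI => ?_)
  obtain ⟨⟨i, -, hi⟩, ⟨m, -, hm⟩⟩ := hB I hI
  exact propext (Bar.inWindow_and_not_and_not_iff ht hkj h1 h2 ⟨i, hi.symm⟩ ⟨m, hm.symm⟩).symm

theorem stmt6 (N : ℕ) (t : ℕ → ℝ) (ht : StrictMono t)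
    (B : Multiset Bar) (hB : endpointsIn B t N)
    (k j : ℕ) (hkj : k < j) (hjN : j ≤ N)
    (s : ℝ) (h1 : t k < s) (h2 : s < t j) :
    (count (⟨.oo, t k, t j⟩ : Bar) B : ℤ) =
      (ecount B s (t j) (t k) : ℤ) - ecount B s (t j) (t (k + 1))
        - ecount B s (t (j - 1)) (t k) + ecount B s (t (j - 1)) (t (k + 1)) :=
  stmt6_general N t ht B hB k j hkj s h1 h2
end
end

section
/- With notation as above, the multiplicity of (t_i,t_j] in B equals n(t_i,t_j} - n(t_i,t_{j+1}} - N(t_i,t_{j+1}), where N(t_i,t_{j+1}) is the multiplicity of the open interval (t_i,t_{j+1}) in B. -/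
/-! Between two consecutive critical values no interval ends, so an interval that is open on the
left at `t i` and contains `t j` either ends exactly at `t j` (and is `(t i, t j]`), or is
`(t i, t (j+1))`, or still contains `t (j+1)`; these three cases are mutually exclusive. -/

open Classical Multiset

noncomputable section

theorem Multiset.countP_eq_add_of_iff_or {α : Type*} {s : Multiset α} {p q r : α → Prop}
    [DecidablePred p] [DecidablePred q] [DecidablePred r]
    (hpqr : ∀ x ∈ s, p x ↔ q x ∨ r x) (hqr : ∀ x ∈ s, q x → ¬r x) :
    countP p s = countP q s + countP r s := by
  have hor : countP p s = countP (fun x => q x ∨ r x) s :=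
    countP_congr rfl fun x hx => propext (hpqr x hx)
  have hand : countP (fun x => q x ∧ r x) s = 0 :=
    countP_eq_zero.mpr fun x hx h => hqr x hx h.1 h.2
  simp only [countP_eq_card_filter] at hor hand ⊢
  rw [hor, ← card_add, filter_add_filter, card_add, hand, add_zero]

theorem StrictMono.notMem_Ioo_add_one {β : Type*} [Preorder β] {t : ℕ → β} (ht : StrictMono t)
    (l j : ℕ) :
    t l ∉ Set.Ioo (t j) (t (j + 1)) := fun ⟨h₁, h₂⟩ =>
  absurd (ht.lt_iff_lt.mp h₂) (not_lt.mpr (ht.lt_iff_lt.mp h₁))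

namespace Bar

theorem mem_leftOpen_iff_of_b_notMem_Ioo {I : Bar} {a x y : ℝ} (hax : a < x) (hxy : x < y)
    (hb : I.b ∉ Set.Ioo x y) :
    (x ∈ I.toSet ∧ I.leftOpen ∧ I.a = a) ↔
      (I = ⟨.oc, a, x⟩ ∨ I = ⟨.oo, a, y⟩) ∨ (y ∈ I.toSet ∧ I.leftOpen ∧ I.a = a) := by
  obtain ⟨kind, a', b⟩ := I
  simp only [Set.mem_Ioo, not_and_or, not_lt] at hb
  cases kind <;> simp only [toSet, leftOpen, Bar.mk.injEq, Set.mem_Ioc, Set.mem_Ioo,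
    reduceCtorEq, false_and, false_or, or_false, or_true, true_and, and_false, iff_self]
  all_goals grind

theorem notMem_toSet_of_eq_oc_or_eq_oo {I : Bar} {a x y : ℝ} (hxy : x < y)
    (hI : I = ⟨.oc, a, x⟩ ∨ I = ⟨.oo, a, y⟩) : y ∉ I.toSet := by
  rcases hI with rfl | rfl <;> simp [toSet, hxy.not_ge]

end Bar

theorem stmt10_general (N : ℕ) (t : ℕ → ℝ) (ht : StrictMono t)
    (B : Multiset Bar) (hB : endpointsIn B t N)
    (i j : ℕ) (hij : i < j) :
    (count (⟨.oc, t i, t j⟩ : Bar) B : ℤ) =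
      (countP (fun I => t j ∈ I.toSet ∧ I.leftOpen ∧ I.a = t i) B : ℤ)
        - countP (fun I => t (j + 1) ∈ I.toSet ∧ I.leftOpen ∧ I.a = t i) B
        - count (⟨.oo, t i, t (j + 1)⟩ : Bar) B := by
  have hsplit : countP (fun I : Bar => t j ∈ I.toSet ∧ I.leftOpen ∧ I.a = t i) B =
      countP (fun I => I = ⟨.oc, t i, t j⟩ ∨ I = ⟨.oo, t i, t (j + 1)⟩) B +
        countP (fun I : Bar => t (j + 1) ∈ I.toSet ∧ I.leftOpen ∧ I.a = t i) B :=
    countP_eq_add_of_iff_or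
      (fun I hI => by
        obtain ⟨l, -, hl⟩ := (hB I hI).2
        exact Bar.mem_leftOpen_iff_of_b_notMem_Ioo (ht hij) (ht (Nat.lt_add_one j))
          (hl ▸ ht.notMem_Ioo_add_one l j))
      (fun _ _ hI hmem => Bar.notMem_toSet_of_eq_oc_or_eq_oo (ht (Nat.lt_add_one j)) hI hmem.1)
  have hends : countP (fun I => I = ⟨.oc, t i, t j⟩ ∨ I = ⟨.oo, t i, t (j + 1)⟩) B =
      countP (· = ⟨.oc, t i, t j⟩) B + countP (· = ⟨.oo, t i, t (j + 1)⟩) B :=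
    countP_eq_add_of_iff_or (fun _ _ => Iff.rfl) (fun _ _ h₁ h₂ => by simp [h₁] at h₂)
  have hcount (J : Bar) : count J B = countP (· = J) B :=
    countP_congr rfl fun _ _ => propext eq_comm
  rw [hcount, hcount]
  omega

theorem stmt10 (N : ℕ) (t : ℕ → ℝ) (ht : StrictMono t)
    (B : Multiset Bar) (hB : endpointsIn B t N)
    (i j : ℕ) (hij : i < j) (hjN : j + 1 ≤ N) :
    (count (⟨.oc, t i, t j⟩ : Bar) B : ℤ) =
      (countP (fun I => t j ∈ I.toSet ∧ I.leftOpen ∧ I.a = t i) B : ℤ)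
        - countP (fun I => t (j + 1) ∈ I.toSet ∧ I.leftOpen ∧ I.a = t i) B
        - count (⟨.oo, t i, t (j + 1)⟩ : Bar) B :=
  stmt10_general N t ht B hB i j hij
end
end

section
/- With notation as above, the multiplicity of [t_i,t_j) in B equals n{t_i,t_j) - n{t_{i-1},t_j) - N(t_{i-1},t_j), where n{s,t_j) is the number of intervals in B containing s with open right endpoint t_j and N(t_{i-1},t_j) is the multiplicity of the open interval (t_{i-1},t_j). -/
open Classical Multiset

noncomputable section

/-!
A right-open interval ending at `v > u > s` that contains `s` also contains `u`. If it contains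
`u` but not `s`, its left endpoint lies in `[s, u]`; when no endpoint lies strictly between `s`
and `u`, that leaves exactly `[u, v)` and `(s, v)`. Counting over `B` gives the identity, with
`s = t (i - 1)` and `u = t i`, since no critical value lies strictly between consecutive ones.
-/

theorem StrictMono.apply_notMem_Ioo_apply_succ {α : Type*} [Preorder α] {t : ℕ → α}
    (ht : StrictMono t) (n k : ℕ) : t k ∉ Set.Ioo (t n) (t (n + 1)) := by
  rintro ⟨hnk, hkn⟩
  rw [ht.lt_iff_lt] at hnk hkn
  omega

namespace Bar

theorem ite_mem_rightOpen_eq {s u v : ℝ} (hsu : s < u) (huv : u < v) (I : Bar)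
    (hI : I.a ∉ Set.Ioo s u) :
    (if u ∈ I.toSet ∧ I.rightOpen ∧ I.b = v then 1 else 0 : ℕ)
      = (if s ∈ I.toSet ∧ I.rightOpen ∧ I.b = v then 1 else 0)
        + (if (⟨.co, u, v⟩ : Bar) = I then 1 else 0)
        + (if (⟨.oo, s, v⟩ : Bar) = I then 1 else 0) := by
  obtain ⟨kind, a, b⟩ := I
  rw [Set.mem_Ioo, not_and_or, not_lt, not_lt] at hI
  cases kind <;>
    simp only [toSet, rightOpen, mk.injEq, Set.mem_Icc, Set.mem_Ico, Set.mem_Ioo, Set.mem_Ioc,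
      reduceCtorEq, true_and, false_and, and_false, false_or, or_false] <;>
    split_ifs <;> grind

theorem countP_mem_rightOpen_eq {s u v : ℝ} (hsu : s < u) (huv : u < v) (B : Multiset Bar)
    (hB : ∀ I ∈ B, I.a ∉ Set.Ioo s u) :
    countP (fun I => u ∈ I.toSet ∧ I.rightOpen ∧ I.b = v) B
      = countP (fun I => s ∈ I.toSet ∧ I.rightOpen ∧ I.b = v) B
        + count (⟨.co, u, v⟩ : Bar) B + count (⟨.oo, s, v⟩ : Bar) B := by
  induction B using Multiset.induction_on with
  | empty => simp
  | cons I B ih =>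
    have hI := ite_mem_rightOpen_eq hsu huv I (hB I (mem_cons_self I B))
    simp only [countP_cons, count_cons, ih fun J hJ => hB J (mem_cons_of_mem hJ)]
    omega

end Bar

theorem stmt11_general (N : ℕ) (t : ℕ → ℝ) (ht : StrictMono t)
    (B : Multiset Bar) (hB : endpointsIn B t N)
    (i j : ℕ) (hi1 : 1 ≤ i) (hij : i < j) :
    (count (⟨.co, t i, t j⟩ : Bar) B : ℤ) =
      (countP (fun I => t i ∈ I.toSet ∧ I.rightOpen ∧ I.b = t j) B : ℤ)
        - countP (fun I => t (i - 1) ∈ I.toSet ∧ I.rightOpen ∧ I.b = t j) B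
        - count (⟨.oo, t (i - 1), t j⟩ : Bar) B := by
  obtain ⟨n, rfl⟩ : ∃ n, i = n + 1 := ⟨i - 1, by omega⟩
  have hgap : ∀ I ∈ B, I.a ∉ Set.Ioo (t n) (t (n + 1)) := fun I hI => by
    obtain ⟨⟨k, -, hk⟩, -⟩ := hB I hI
    exact hk ▸ ht.apply_notMem_Ioo_apply_succ n k
  have hsplit := Bar.countP_mem_rightOpen_eq (ht (Nat.lt_succ_self n)) (ht hij) B hgap
  rw [Nat.add_sub_cancel, hsplit]
  push_cast
  ring

theorem stmt11 (N : ℕ) (t : ℕ → ℝ) (ht : StrictMono t)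
    (B : Multiset Bar) (hB : endpointsIn B t N)
    (i j : ℕ) (hi1 : 1 ≤ i) (hij : i < j) (hjN : j ≤ N) :
    (count (⟨.co, t i, t j⟩ : Bar) B : ℤ) =
      (countP (fun I => t i ∈ I.toSet ∧ I.rightOpen ∧ I.b = t j) B : ℤ)
        - countP (fun I => t (i - 1) ∈ I.toSet ∧ I.rightOpen ∧ I.b = t j) B
        - count (⟨.oo, t (i - 1), t j⟩ : Bar) B :=
  stmt11_general N t ht B hB i j hi1 hij
end
end

section
/- With notation as above, the multiplicity of the closed interval [t_i,t_j] in B equals n[t_i,t_j} - n[t_i,t_{j+1}} - N[t_i,t_{j+1}), where n[t_i,s} is the number of intervals in B containing s with closed left endpoint t_i and N[t_i,t_{j+1}) is the multiplicity of [t_i,t_{j+1}). -/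
open Classical Multiset

noncomputable section

/-
Moving the point from `t j` to `t (j + 1)`, a bar with closed left end `t i` can stop containing
it only if its right end lies in `[t j, t (j + 1)]`. No critical value lies strictly between the
two, so the bars lost are exactly the copies of `[t i, t j]` and of `[t i, t (j + 1))`.
-/

theorem Multiset.countP_or_of_disjoint {α : Type*} {p q : α → Prop} [DecidablePred p]
    [DecidablePred q] {s : Multiset α} (h : ∀ a ∈ s, ¬(p a ∧ q a)) :
    countP (fun a => p a ∨ q a) s = countP p s + countP q s := by
  simp only [countP_eq_card_filter, ← card_add, filter_add_filter, filter_eq_nil.2 h, add_zero]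

namespace Bar

theorem mem_toSet_iff_of_leftClosed {I : Bar} {s s' : ℝ} (hI : I.leftClosed) (ha : I.a ≤ s)
    (hss' : s < s') (hb : I.b ∉ Set.Ioo s s') :
    s ∈ I.toSet ↔ s' ∈ I.toSet ∨ I = ⟨.cc, I.a, s⟩ ∨ I = ⟨.co, I.a, s'⟩ := by
  obtain ⟨kind, a, b⟩ := I
  rcases hI with rfl | rfl <;>
    simp only [toSet, Set.mem_Icc, Set.mem_Ico, Set.mem_Ioo, mk.injEq] at hb ⊢ <;> grind

end Bar

theorem countP_leftClosed_mem_eq_of_no_endpoint_between (B : Multiset Bar) {a s s' : ℝ} (has : a ≤ s) (hss' : s < s')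
    (hB : ∀ I ∈ B, I.b ∉ Set.Ioo s s') :
    countP (fun I => s ∈ I.toSet ∧ I.leftClosed ∧ I.a = a) B =
      countP (fun I => s' ∈ I.toSet ∧ I.leftClosed ∧ I.a = a) B
        + count ⟨.cc, a, s⟩ B + count ⟨.co, a, s'⟩ B := by
  have hsplit : ∀ I ∈ B, (s ∈ I.toSet ∧ I.leftClosed ∧ I.a = a) ↔
      (s' ∈ I.toSet ∧ I.leftClosed ∧ I.a = a) ∨ I = ⟨.cc, a, s⟩ ∨ I = ⟨.co, a, s'⟩ := by
    intro I hI
    by_cases hIa : I.leftClosed ∧ I.a = a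
    · obtain ⟨hlc, rfl⟩ := hIa
      simpa [hlc] using Bar.mem_toSet_iff_of_leftClosed hlc has hss' (hB I hI)
    · refine iff_of_false (fun h => hIa h.2) ?_
      rintro (h | rfl | rfl)
      exacts [hIa h.2, hIa ⟨.inl rfl, rfl⟩, hIa ⟨.inr rfl, rfl⟩]
  rw [countP_congr rfl fun I hI => propext (hsplit I hI), countP_or_of_disjoint,
    countP_or_of_disjoint, add_assoc]
  · simp only [count, eq_comm]
  · rintro I - ⟨rfl, h⟩
    simp at h
  · rintro I - ⟨⟨hmem, -⟩, rfl | rfl⟩ <;> simp [Bar.toSet, hss'.not_ge] at hmem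

theorem stmt12_general (N : ℕ) (t : ℕ → ℝ) (ht : StrictMono t)
    (B : Multiset Bar) (hB : endpointsIn B t N)
    (i j : ℕ) (hij : i ≤ j) :
    (count (⟨.cc, t i, t j⟩ : Bar) B : ℤ) =
      (countP (fun I => t j ∈ I.toSet ∧ I.leftClosed ∧ I.a = t i) B : ℤ)
        - countP (fun I => t (j + 1) ∈ I.toSet ∧ I.leftClosed ∧ I.a = t i) B
        - count (⟨.co, t i, t (j + 1)⟩ : Bar) B := by
  have hgap : ∀ I ∈ B, I.b ∉ Set.Ioo (t j) (t (j + 1)) := by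
    rintro I hI ⟨hjb, hbj⟩
    obtain ⟨-, k, -, hk⟩ := hB I hI
    exact ht.monotone.ne_of_lt_of_lt_nat j hjb hbj k hk.symm
  rw [countP_leftClosed_mem_eq_of_no_endpoint_between B (ht.monotone hij) (ht j.lt_succ_self) hgap]
  push_cast
  ring

theorem stmt12 (N : ℕ) (t : ℕ → ℝ) (ht : StrictMono t)
    (B : Multiset Bar) (hB : endpointsIn B t N)
    (i j : ℕ) (hij : i ≤ j) (hjN : j + 1 ≤ N) :
    (count (⟨.cc, t i, t j⟩ : Bar) B : ℤ) =
      (countP (fun I => t j ∈ I.toSet ∧ I.leftClosed ∧ I.a = t i) B : ℤ)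
        - countP (fun I => t (j + 1) ∈ I.toSet ∧ I.leftClosed ∧ I.a = t i) B
        - count (⟨.co, t i, t (j + 1)⟩ : Bar) B :=
  stmt12_general N t ht B hB i j hij
end
end

section
/- For a persistence module over indices {0,...,N} that decomposes as a finite direct sum of interval modules I[a,b], the multiplicity μ(i,j) of the summand I[i,j-1] (i.e., the bar code [t_i,t_j)) satisfies μ(i,j) = β(i,j-1) - β(i-1,j-1) - β(i,j) + β(i-1,j) for 0 < i < j ≤ N, where β(i,j) = dim(range φ_{ij}), with the conventions β(-1,·) = 0 and β(i,∞) = dim(range φ_{iN}). -/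
/-- finrank of a finite supremum of an independent family of submodules is
the sum of the finranks. -/
lemma finrank_biSup_of_indep {K V ι : Type*} [Field K] [AddCommGroup V] [Module K V]
    [FiniteDimensional K V] [DecidableEq ι] (T : ι → Submodule K V)
    (h : iSupIndep T) (s : Finset ι) :
    Module.finrank K ↥(⨆ c ∈ s, T c) = ∑ c ∈ s, Module.finrank K ↥(T c) := by
  classical
  induction s using Finset.induction with
  | empty => simp
  | @insert c s hc ih =>
    rw [Finset.sum_insert hc, ← ih, Finset.iSup_insert]
    have hdis : Disjoint (T c) (⨆ x ∈ s, T x) := by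
      refine (h c).mono_right ?_
      refine iSup₂_le fun x hx => ?_
      exact le_iSup₂_of_le x (fun hxc : x = c => hc (hxc ▸ hx)) le_rfl
    have := Submodule.finrank_sup_add_finrank_inf_eq (T c) (⨆ x ∈ s, T x)
    rw [hdis.eq_bot, finrank_bot] at this
    omega

lemma finrank_iSup_of_indep {K V ι : Type*} [Field K] [AddCommGroup V] [Module K V]
    [FiniteDimensional K V] [Fintype ι] [DecidableEq ι] (T : ι → Submodule K V)
    (h : iSupIndep T) :
    Module.finrank K ↥(⨆ c, T c) = ∑ c, Module.finrank K ↥(T c) := by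
  have e : (⨆ c ∈ Finset.univ, T c) = ⨆ c, T c := by
    simp only [Finset.mem_univ, iSup_pos]
  rw [← finrank_biSup_of_indep T h Finset.univ, e]

/-- For a persistence module over `{0, …, N}` decomposed as a finite (internal) direct
sum of interval modules, the multiplicity of the summand `I[i, j-1]` (the bar code
`[t_i, t_j)`) is recovered from the persistent Betti numbers `β(k,l) = dim (range φ_{kl})`
by the inclusion–exclusion formula
`μ(i,j) = β(i,j-1) - β(i-1,j-1) - β(i,j) + β(i-1,j)` for `0 < i < j ≤ N`. -/
theorem stmt16 (κ : Type*) [Field κ] (N : ℕ)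
    (V : Fin (N + 1) → Type*) [∀ k, AddCommGroup (V k)] [∀ k, Module κ (V k)]
    [∀ k, FiniteDimensional κ (V k)]
    (φ : ∀ k l : Fin (N + 1), k ≤ l → (V k →ₗ[κ] V l))
    (hid : ∀ k, φ k k le_rfl = LinearMap.id)
    (hcomp : ∀ k l m (hkl : k ≤ l) (hlm : l ≤ m),
      (φ l m hlm).comp (φ k l hkl) = φ k m (hkl.trans hlm))
    (ι : Type*) [Fintype ι] [DecidableEq ι]
    (a b : ι → Fin (N + 1)) (hab : ∀ c, a c ≤ b c)
    (S : ι → ∀ k : Fin (N + 1), Submodule κ (V k))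
    (hdecomp : ∀ k, DirectSum.IsInternal (fun c => S c k))
    (hdim : ∀ c k, a c ≤ k → k ≤ b c → Module.finrank κ (S c k) = 1)
    (hzero : ∀ c k, ¬(a c ≤ k ∧ k ≤ b c) → S c k = ⊥)
    (hmap : ∀ c k l (hkl : k ≤ l), Submodule.map (φ k l hkl) (S c k) ≤ S c l)
    (hinj : ∀ c k l (hkl : k ≤ l), a c ≤ k → l ≤ b c →
      ∀ x ∈ S c k, φ k l hkl x = 0 → x = 0)
    (i j : ℕ) (hi : 0 < i) (hij : i < j) (hjN : j ≤ N)
    (β : ∀ k l : Fin (N + 1), k ≤ l → ℕ)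
    (hβ : ∀ k l (h : k ≤ l), β k l h = Module.finrank κ ↥(LinearMap.range (φ k l h))) :
    ((Finset.univ.filter (fun c => (a c : ℕ) = i ∧ (b c : ℕ) = j - 1)).card : ℤ) =
      (β ⟨i, by omega⟩ ⟨j - 1, by omega⟩ (Fin.mk_le_mk.mpr (by omega)) : ℤ)
        - β ⟨i - 1, by omega⟩ ⟨j - 1, by omega⟩ (Fin.mk_le_mk.mpr (by omega))
        - β ⟨i, by omega⟩ ⟨j, by omega⟩ (Fin.mk_le_mk.mpr (by omega))
        + β ⟨i - 1, by omega⟩ ⟨j, by omega⟩ (Fin.mk_le_mk.mpr (by omega)) := by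
  classical
  -- Key: β(k,l) counts intervals with a c ≤ k and l ≤ b c.
  have key : ∀ k l (h : k ≤ l),
      Module.finrank κ ↥(LinearMap.range (φ k l h)) =
        (Finset.univ.filter (fun c => a c ≤ k ∧ l ≤ b c)).card := by
    intro k l h
    set T : ι → Submodule κ (V l) := fun c => Submodule.map (φ k l h) (S c k) with hT
    have hrange : LinearMap.range (φ k l h) = ⨆ c, T c := by
      rw [← Submodule.map_top, ← (hdecomp k).submodule_iSup_eq_top, Submodule.map_iSup]
    have hTle : ∀ c, T c ≤ S c l := fun c => hmap c k l h
    have hindep : iSupIndep T :=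
      ((hdecomp l).submodule_iSupIndep).mono hTle
    rw [hrange, finrank_iSup_of_indep T hindep, Finset.card_filter]
    refine Finset.sum_congr rfl fun c _ => ?_
    by_cases hc : a c ≤ k ∧ l ≤ b c
    · rw [if_pos hc]
      have hk : k ≤ b c := h.trans hc.2
      have hal : a c ≤ l := hc.1.trans h
      -- φ restricted to S c k is injective
      have hinj' : Function.Injective ((φ k l h).comp (S c k).subtype) := by
        rw [← LinearMap.ker_eq_bot, LinearMap.ker_eq_bot']
        intro x hx
        have : (x : V k) = 0 := hinj c k l h hc.1 hc.2 x x.2 hx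
        exact Subtype.ext this
      have hTc : T c = LinearMap.range ((φ k l h).comp (S c k).subtype) := by
        rw [LinearMap.range_comp, Submodule.range_subtype]
      rw [hTc, LinearMap.finrank_range_of_inj hinj']
      exact hdim c k hc.1 hk
    · rw [if_neg hc]
      rcases not_and_or.mp hc with h1 | h2
      · have hSk : S c k = ⊥ := hzero c k (fun hh => h1 hh.1)
        have : T c = ⊥ := by rw [hT]; simp [hSk]
        rw [this, finrank_bot]
      · have hSl : S c l = ⊥ := hzero c l (fun hh => h2 hh.2)
        have : T c = ⊥ := le_bot_iff.mp (hSl ▸ hTle c)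
        rw [this, finrank_bot]
  -- counting identity over ℕ
  have count : (Finset.univ.filter (fun c => (a c : ℕ) = i ∧ (b c : ℕ) = j - 1)).card +
      (Finset.univ.filter (fun c => (a c : ℕ) ≤ i - 1 ∧ j - 1 ≤ (b c : ℕ))).card +
      (Finset.univ.filter (fun c => (a c : ℕ) ≤ i ∧ j ≤ (b c : ℕ))).card =
      (Finset.univ.filter (fun c => (a c : ℕ) ≤ i ∧ j - 1 ≤ (b c : ℕ))).card +
      (Finset.univ.filter (fun c => (a c : ℕ) ≤ i - 1 ∧ j ≤ (b c : ℕ))).card := by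
    simp only [Finset.card_filter, ← Finset.sum_add_distrib]
    refine Finset.sum_congr rfl fun c _ => ?_
    split_ifs <;> omega
  -- rewrite each β via key
  have e1 := key ⟨i, by omega⟩ ⟨j - 1, by omega⟩ (Fin.mk_le_mk.mpr (by omega))
  have e2 := key ⟨i - 1, by omega⟩ ⟨j - 1, by omega⟩ (Fin.mk_le_mk.mpr (by omega))
  have e3 := key ⟨i, by omega⟩ ⟨j, by omega⟩ (Fin.mk_le_mk.mpr (by omega))
  have e4 := key ⟨i - 1, by omega⟩ ⟨j, by omega⟩ (Fin.mk_le_mk.mpr (by omega))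
  simp only [Fin.le_def] at e1 e2 e3 e4
  rw [hβ, hβ, hβ, hβ, e1, e2, e3, e4]
  push_cast
  omega
end
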